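/- Let n ≥ 3 be an integer and let A, B, λ, θ, ℓ be real numbers with A ≥ 0, B ≥ 0, λ > 0, θ > 0 and 0 < ℓ, and suppose ℓ ≤ λ^((n−2)/4)·θ^(−1) and ℓ ≤ θ^((n−2)/(4(n−1))). Then −θ^(−(n+2)/(n−2))·(A − λ·B·θ)·ℓ + A·θ^(−4/(n−2))·ℓ^(−(3n−2)/(n−2)) − B·ℓ^((n+2)/(n−2)) ≥ 0. -/

import Mathlib

/-- For an integer `n ≥ 3` and reals `A ≥ 0`, `B ≥ 0`, `λ > 0`, `θ > 0`,
`ℓ > 0` with `ℓ ≤ λ^((n−2)/4)·θ⁻¹` and `ℓ ≤ θ^((n−2)/(4(n−1)))`, one has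
`−θ^(−(n+2)/(n−2))·(A − λ·B·θ)·ℓ + A·θ^(−4/(n−2))·ℓ^(−(3n−2)/(n−2))
  − B·ℓ^((n+2)/(n−2)) ≥ 0`. -/
theorem lichnerowicz_primed_subsolution_pointwise
    (n : ℕ) (hn : 3 ≤ n) (A B lam θ ℓ : ℝ)
    (hA : 0 ≤ A) (hB : 0 ≤ B) (hlam : 0 < lam) (hθ : 0 < θ) (hℓ : 0 < ℓ)
    (hℓ1 : ℓ ≤ lam ^ (((n : ℝ) - 2) / 4) * θ⁻¹)
    (hℓ2 : ℓ ≤ θ ^ (((n : ℝ) - 2) / (4 * ((n : ℝ) - 1)))) :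
    -θ ^ (-((n : ℝ) + 2) / ((n : ℝ) - 2)) * (A - lam * B * θ) * ℓ
      + A * θ ^ (-4 / ((n : ℝ) - 2)) * ℓ ^ (-(3 * (n : ℝ) - 2) / ((n : ℝ) - 2))
      - B * ℓ ^ (((n : ℝ) + 2) / ((n : ℝ) - 2)) ≥ 0 := by
  have hn' : (3:ℝ) ≤ (n:ℝ) := by exact_mod_cast hn
  have h2 : (0:ℝ) < (n:ℝ) - 2 := by linarith
  have h1 : (0:ℝ) < (n:ℝ) - 1 := by linarith
  -- key 1 : ℓ * θ ≤ lam ^ ((n-2)/4)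
  have k1 : ℓ * θ ≤ lam ^ (((n:ℝ) - 2) / 4) := by
    have := mul_le_mul_of_nonneg_right hℓ1 hθ.le
    rwa [mul_assoc, inv_mul_cancel₀ (ne_of_gt hθ), mul_one] at this
  -- key 3 : (ℓ*θ)^(4/(n-2)) ≤ lam
  have k3 : (ℓ * θ) ^ ((4:ℝ) / ((n:ℝ) - 2)) ≤ lam := by
    have h := Real.rpow_le_rpow (by positivity) k1
      (le_of_lt (by positivity : (0:ℝ) < 4 / ((n:ℝ) - 2)))
    rwa [← Real.rpow_mul hlam.le,
      show (((n:ℝ) - 2) / 4) * ((4:ℝ) / ((n:ℝ) - 2)) = 1 by field_simp,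
      Real.rpow_one] at h
  -- key 2 : ℓ ^ (4*(n-1)/(n-2)) ≤ θ
  have k2 : ℓ ^ ((4 * ((n:ℝ) - 1)) / ((n:ℝ) - 2)) ≤ θ := by
    have h := Real.rpow_le_rpow hℓ.le hℓ2
      (le_of_lt (by positivity : (0:ℝ) < 4 * ((n:ℝ) - 1) / ((n:ℝ) - 2)))
    rwa [← Real.rpow_mul hθ.le,
      show (((n:ℝ) - 2) / (4 * ((n:ℝ) - 1))) * (4 * ((n:ℝ) - 1) / ((n:ℝ) - 2)) = 1 by
        field_simp,
      Real.rpow_one] at h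
  -- A part
  have hApart : A * (θ ^ (-((n:ℝ) + 2) / ((n:ℝ) - 2)) * ℓ)
      ≤ A * (θ ^ (-4 / ((n:ℝ) - 2)) * ℓ ^ (-(3 * (n:ℝ) - 2) / ((n:ℝ) - 2))) := by
    apply mul_le_mul_of_nonneg_left _ hA
    have e1 : θ ^ (-4 / ((n:ℝ) - 2))
        = θ ^ (-((n:ℝ) + 2) / ((n:ℝ) - 2)) * θ := by
      rw [show (-4:ℝ) / ((n:ℝ) - 2) = -((n:ℝ) + 2) / ((n:ℝ) - 2) + 1 by field_simp; ring,
        Real.rpow_add hθ, Real.rpow_one]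
    have e2 : (ℓ:ℝ) = ℓ ^ ((4 * ((n:ℝ) - 1)) / ((n:ℝ) - 2))
        * ℓ ^ (-(3 * (n:ℝ) - 2) / ((n:ℝ) - 2)) := by
      rw [← Real.rpow_add hℓ,
        show (4 * ((n:ℝ) - 1)) / ((n:ℝ) - 2) + -(3 * (n:ℝ) - 2) / ((n:ℝ) - 2) = 1 by
          field_simp; ring,
        Real.rpow_one]
    rw [e1]
    calc θ ^ (-((n:ℝ) + 2) / ((n:ℝ) - 2)) * ℓ
        = θ ^ (-((n:ℝ) + 2) / ((n:ℝ) - 2)) * ℓ ^ (-(3 * (n:ℝ) - 2) / ((n:ℝ) - 2))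
          * ℓ ^ ((4 * ((n:ℝ) - 1)) / ((n:ℝ) - 2)) := by
          rw [mul_assoc, mul_comm (ℓ ^ _) (ℓ ^ _), ← e2]
      _ ≤ θ ^ (-((n:ℝ) + 2) / ((n:ℝ) - 2)) * ℓ ^ (-(3 * (n:ℝ) - 2) / ((n:ℝ) - 2)) * θ := by
          exact mul_le_mul_of_nonneg_left k2 (by positivity)
      _ = θ ^ (-((n:ℝ) + 2) / ((n:ℝ) - 2)) * θ * ℓ ^ (-(3 * (n:ℝ) - 2) / ((n:ℝ) - 2)) := by
          ring
  -- B part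
  have hBpart : B * ℓ ^ (((n:ℝ) + 2) / ((n:ℝ) - 2))
      ≤ B * (lam * θ * (θ ^ (-((n:ℝ) + 2) / ((n:ℝ) - 2)) * ℓ)) := by
    apply mul_le_mul_of_nonneg_left _ hB
    have e3 : θ * θ ^ (-((n:ℝ) + 2) / ((n:ℝ) - 2)) = θ ^ (-4 / ((n:ℝ) - 2)) := by
      rw [show (-4:ℝ) / ((n:ℝ) - 2) = 1 + -((n:ℝ) + 2) / ((n:ℝ) - 2) by field_simp; ring,
        Real.rpow_add hθ, Real.rpow_one]
    have e4 : ℓ ^ (((n:ℝ) + 2) / ((n:ℝ) - 2)) = ℓ * ℓ ^ ((4:ℝ) / ((n:ℝ) - 2)) := by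
      rw [show ((n:ℝ) + 2) / ((n:ℝ) - 2) = 1 + (4:ℝ) / ((n:ℝ) - 2) by field_simp; ring,
        Real.rpow_add hℓ, Real.rpow_one]
    have e5 : ℓ ^ ((4:ℝ) / ((n:ℝ) - 2)) * θ ^ ((4:ℝ) / ((n:ℝ) - 2)) ≤ lam := by
      rwa [← Real.mul_rpow hℓ.le hθ.le]
    calc ℓ ^ (((n:ℝ) + 2) / ((n:ℝ) - 2))
        = ℓ * (ℓ ^ ((4:ℝ) / ((n:ℝ) - 2)) * θ ^ ((4:ℝ) / ((n:ℝ) - 2)))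
          * θ ^ (-(4:ℝ) / ((n:ℝ) - 2)) := by
          rw [e4]
          rw [show (-(4:ℝ)) / ((n:ℝ) - 2) = -((4:ℝ) / ((n:ℝ) - 2)) by ring,
            Real.rpow_neg hθ.le]
          field_simp
      _ ≤ ℓ * lam * θ ^ (-(4:ℝ) / ((n:ℝ) - 2)) := by
          apply mul_le_mul_of_nonneg_right _ (by positivity)
          exact mul_le_mul_of_nonneg_left e5 hℓ.le
      _ = lam * θ * (θ ^ (-((n:ℝ) + 2) / ((n:ℝ) - 2)) * ℓ) := by
          rw [show (-(4:ℝ)) / ((n:ℝ) - 2) = -4 / ((n:ℝ) - 2) by ring, ← e3]; ring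
  nlinarith [hApart, hBpart]
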